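/- Let Γ be a finitely generated group, μ a finitely supported symmetric generating probability measure on Γ, and Δ_μ the associated Laplacian element. If ξ ∈ Σ²I[Γ] and δ > 0, then ξ + δΔ_μ is an algebraic interior point of Σ²I[Γ] inside the real vector space I[Γ]^her of hermitian elements of I[Γ]: for every hermitian η ∈ I[Γ] there exists t ∈ (0, 1] such that (1−t)(ξ + δΔ_μ) + tη ∈ Σ²I[Γ]. -/

import Mathlib

open MonoidAlgebra Finset RealInnerProductSpace

/-- The involution `ξ*(x) = ξ(x⁻¹)` on the real group algebra `ℝ[Γ]`. -/
def astar {Γ : Type*} [Group Γ] (ξ : MonoidAlgebra ℝ Γ) : MonoidAlgebra ℝ Γ :=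
  MonoidAlgebra.ofCoeff (Finsupp.equivMapDomain (Equiv.inv Γ) ξ.coeff)

/-- The augmentation character `ℝ[Γ] → ℝ`, `ξ ↦ Σ_x ξ(x)`. -/
noncomputable def aug (Γ : Type*) [Group Γ] : MonoidAlgebra ℝ Γ →ₐ[ℝ] ℝ :=
  MonoidAlgebra.lift ℝ ℝ Γ 1

/-- The augmentation ideal `I[Γ] = {ξ ∈ ℝ[Γ] : Σ_x ξ(x) = 0}`, as an `ℝ`-submodule. -/
noncomputable def augIdeal (Γ : Type*) [Group Γ] : Submodule ℝ (MonoidAlgebra ℝ Γ) :=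
  LinearMap.ker (aug Γ).toLinearMap

/-- `Σ²ℝ[Γ]`, the set of finite sums of hermitian squares in `ℝ[Γ]`. -/
def SOS (Γ : Type*) [Group Γ] : Set (MonoidAlgebra ℝ Γ) :=
  {ξ | ∃ (n : ℕ) (f : Fin n → MonoidAlgebra ℝ Γ), ξ = ∑ i, astar (f i) * f i}

/-- `Σ²I[Γ]`, the set of finite sums of hermitian squares of elements of `I[Γ]`. -/
def SOSI (Γ : Type*) [Group Γ] : Set (MonoidAlgebra ℝ Γ) :=
  {ξ | ∃ (n : ℕ) (f : Fin n → MonoidAlgebra ℝ Γ),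
    (∀ i, f i ∈ augIdeal Γ) ∧ ξ = ∑ i, astar (f i) * f i}

/-!
Write `Δ = 1 - μ` and `Δₓ = (1 - x)*(1 - x) = 2 - x - x⁻¹ ∈ Σ²I[Γ]`, and order hermitian elements
by the cone `Σ²I[Γ]`. Since `Σₓ μ(x) Δₓ = 2Δ`, every `Δ_y` with `μ(y) > 0` is at most a multiple
of `Δ`; the parallelogram law gives `Δ_{xy} ≤ 2Δₓ + 2Δ_y`, so this extends to all of `Γ` because
`supp μ` generates. A hermitian `η ∈ I[Γ]` equals `-½ Σₓ η(x) Δₓ`, hence `RΔ + η ∈ Σ²I[Γ]` for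
some `R ≥ 0`: `Δ` is an order unit. A convex combination of `ξ + δΔ` with `η` that gives `η`
a small enough weight therefore stays in the cone.
-/

section GroupAlgebra
variable {Γ : Type*} [Group Γ]

@[simp]
lemma astar_coeff (ξ : MonoidAlgebra ℝ Γ) (x : Γ) : (astar ξ).coeff x = ξ.coeff x⁻¹ := rfl

@[simp]
lemma astar_single (x : Γ) (r : ℝ) : astar (single x r) = single x⁻¹ r := by
  simp [astar, ← MonoidAlgebra.ofCoeff_single, Finsupp.equivMapDomain_single]

@[simp]
lemma astar_zero : astar (0 : MonoidAlgebra ℝ Γ) = 0 := by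
  ext; simp

@[simp]
lemma astar_add (a b : MonoidAlgebra ℝ Γ) : astar (a + b) = astar a + astar b := by
  ext; simp

@[simp]
lemma astar_sub (a b : MonoidAlgebra ℝ Γ) : astar (a - b) = astar a - astar b := by
  ext; simp

@[simp]
lemma astar_smul (c : ℝ) (a : MonoidAlgebra ℝ Γ) : astar (c • a) = c • astar a := by
  ext; simp

@[simp]
lemma astar_one : astar (1 : MonoidAlgebra ℝ Γ) = 1 := by
  rw [MonoidAlgebra.one_def, astar_single, inv_one]

lemma astar_mul (a b : MonoidAlgebra ℝ Γ) : astar (a * b) = astar b * astar a := by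
  induction a using MonoidAlgebra.induction_linear with
  | zero => simp
  | add a a' ha ha' => simp [add_mul, mul_add, ha, ha']
  | single x r =>
    induction b using MonoidAlgebra.induction_linear with
    | zero => simp
    | add b b' hb hb' => simp [add_mul, mul_add, hb, hb']
    | single y s => simp [single_mul_single, mul_comm r s]

lemma aug_single (x : Γ) (r : ℝ) : aug Γ (single x r) = r := by
  simp [aug, MonoidAlgebra.lift_single]

lemma aug_eq_sum_coeff (a : MonoidAlgebra ℝ Γ) : aug Γ a = ∑ x ∈ a.coeff.support, a.coeff x := by
  conv_lhs => rw [← MonoidAlgebra.sum_coeff_single a]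
  simp only [Finsupp.sum, map_sum, aug_single]

end GroupAlgebra

section Cone
variable {Γ : Type*} [Group Γ]

lemma zero_mem_SOSI : (0 : MonoidAlgebra ℝ Γ) ∈ SOSI Γ :=
  ⟨0, Fin.elim0, fun i ↦ i.elim0, by simp⟩

lemma add_mem_SOSI {a b : MonoidAlgebra ℝ Γ} (ha : a ∈ SOSI Γ) (hb : b ∈ SOSI Γ) :
    a + b ∈ SOSI Γ := by
  obtain ⟨n, f, hf, rfl⟩ := ha
  obtain ⟨m, g, hg, rfl⟩ := hb
  refine ⟨n + m, Fin.append f g, Fin.addCases (by simpa using hf) (by simpa using hg), ?_⟩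
  simp [Fin.sum_univ_add]

lemma smul_mem_SOSI {c : ℝ} (hc : 0 ≤ c) {a : MonoidAlgebra ℝ Γ} (ha : a ∈ SOSI Γ) :
    c • a ∈ SOSI Γ := by
  obtain ⟨n, f, hf, rfl⟩ := ha
  refine ⟨n, fun i ↦ √c • f i, fun i ↦ Submodule.smul_mem _ _ (hf i), ?_⟩
  simp only [Finset.smul_sum, astar_smul, smul_mul_smul, Real.mul_self_sqrt hc]

lemma sum_mem_SOSI {ι : Type*} {s : Finset ι} {f : ι → MonoidAlgebra ℝ Γ}
    (h : ∀ i ∈ s, f i ∈ SOSI Γ) : ∑ i ∈ s, f i ∈ SOSI Γ := by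
  classical
  induction s using Finset.induction with
  | empty => simpa using zero_mem_SOSI
  | insert x s hx ih =>
    rw [Finset.sum_insert hx]
    exact add_mem_SOSI (h x (mem_insert_self x s)) (ih fun i hi ↦ h i (mem_insert_of_mem hi))

lemma astar_mul_self_mem_SOSI {a : MonoidAlgebra ℝ Γ} (ha : a ∈ augIdeal Γ) :
    astar a * a ∈ SOSI Γ :=
  ⟨1, fun _ ↦ a, fun _ ↦ ha, by simp⟩

end Cone

section EdgeLaplacian
variable {Γ : Type*} [Group Γ]

noncomputable def edgeLaplacian (x : Γ) : MonoidAlgebra ℝ Γ :=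
  astar (1 - single x 1) * (1 - single x 1)

lemma one_sub_single_mem_augIdeal (x : Γ) : (1 - single x 1 : MonoidAlgebra ℝ Γ) ∈ augIdeal Γ := by
  simp [augIdeal, aug_single]

lemma edgeLaplacian_mem_SOSI (x : Γ) : edgeLaplacian x ∈ SOSI Γ :=
  astar_mul_self_mem_SOSI (one_sub_single_mem_augIdeal x)

lemma edgeLaplacian_eq (x : Γ) :
    edgeLaplacian x = 2 - single x 1 - single x⁻¹ 1 := by
  simp only [edgeLaplacian, astar_sub, astar_one, astar_single, sub_mul, mul_sub, one_mul,
    mul_one, single_mul_single, inv_mul_cancel, ← MonoidAlgebra.one_def]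
  rw [show (2 : MonoidAlgebra ℝ Γ) = 1 + 1 by norm_num]
  abel

lemma edgeLaplacian_one : edgeLaplacian (1 : Γ) = 0 := by
  rw [edgeLaplacian_eq, inv_one, ← MonoidAlgebra.one_def]
  norm_num

lemma edgeLaplacian_inv (x : Γ) : edgeLaplacian x⁻¹ = edgeLaplacian x := by
  rw [edgeLaplacian_eq, edgeLaplacian_eq, inv_inv]
  abel

lemma astar_add_mul_add_add_astar_sub_mul_sub (a b : MonoidAlgebra ℝ Γ) :
    astar (a + b) * (a + b) + astar (a - b) * (a - b) = (2 : ℝ) • (astar a * a + astar b * b) := by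
  rw [astar_add, astar_sub, two_smul]
  noncomm_ring

lemma astar_mul_self_single_mul (x : Γ) (a : MonoidAlgebra ℝ Γ) :
    astar (single x 1 * a) * (single x 1 * a) = astar a * a := by
  rw [astar_mul, astar_single, mul_assoc, ← mul_assoc (single x⁻¹ 1), single_mul_single, inv_mul_cancel,
    mul_one, ← MonoidAlgebra.one_def, one_mul]

lemma two_smul_add_sub_edgeLaplacian_mul_mem_SOSI (x y : Γ) :
    (2 : ℝ) • (edgeLaplacian x + edgeLaplacian y) - edgeLaplacian (x * y) ∈ SOSI Γ := by
  have hsplit : (1 - single (x * y) 1 : MonoidAlgebra ℝ Γ)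
      = (1 - single x 1) + single x 1 * (1 - single y 1) := by
    simp [mul_sub, single_mul_single]
  have key := astar_add_mul_add_add_astar_sub_mul_sub (1 - single x 1 : MonoidAlgebra ℝ Γ)
    (single x 1 * (1 - single y 1))
  rw [← hsplit, astar_mul_self_single_mul] at key
  simp only [edgeLaplacian, ← key, add_sub_cancel_left]
  refine astar_mul_self_mem_SOSI (Submodule.sub_mem _ (one_sub_single_mem_augIdeal x) ?_)
  simp [augIdeal, aug_single]

lemma sum_smul_edgeLaplacian {ν : MonoidAlgebra ℝ Γ} (hν : ∀ x : Γ, ν.coeff x⁻¹ = ν.coeff x) :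
    ∑ x ∈ ν.coeff.support, ν.coeff x • edgeLaplacian x = (2 : ℝ) • (aug Γ ν • 1 - ν) := by
  have hsingle : ∑ x ∈ ν.coeff.support, ν.coeff x • (single x 1 : MonoidAlgebra ℝ Γ) = ν := by
    conv_rhs => rw [← MonoidAlgebra.sum_coeff_single ν]
    simp [Finsupp.sum]
  have hinv : ∑ x ∈ ν.coeff.support, ν.coeff x • (single x⁻¹ 1 : MonoidAlgebra ℝ Γ)
      = ∑ x ∈ ν.coeff.support, ν.coeff x • (single x 1 : MonoidAlgebra ℝ Γ) :=
    Finset.sum_equiv (Equiv.inv Γ) (by simp [hν]) (by simp [hν])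
  simp only [edgeLaplacian_eq, smul_sub, Finset.sum_sub_distrib, hinv, hsingle, ← Finset.sum_smul,
    ← aug_eq_sum_coeff]
  rw [show (2 : MonoidAlgebra ℝ Γ) = (2 : ℝ) • 1 by simp [two_smul]; norm_num]
  module

end EdgeLaplacian

section BoundedBelow
variable {Γ : Type*} [Group Γ]

def IsBoundedBelowBy (u a : MonoidAlgebra ℝ Γ) : Prop :=
  ∃ R : ℝ, 0 ≤ R ∧ R • u + a ∈ SOSI Γ

variable {u a b : MonoidAlgebra ℝ Γ}

lemma IsBoundedBelowBy.of_mem_SOSI (ha : a ∈ SOSI Γ) : IsBoundedBelowBy u a :=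
  ⟨0, le_rfl, by simpa using ha⟩

lemma IsBoundedBelowBy.add (ha : IsBoundedBelowBy u a) (hb : IsBoundedBelowBy u b) :
    IsBoundedBelowBy u (a + b) := by
  obtain ⟨R, hR, ha⟩ := ha
  obtain ⟨S, hS, hb⟩ := hb
  refine ⟨R + S, add_nonneg hR hS, ?_⟩
  rw [show (R + S) • u + (a + b) = (R • u + a) + (S • u + b) by module]
  exact add_mem_SOSI ha hb

lemma IsBoundedBelowBy.smul {c : ℝ} (hc : 0 ≤ c) (ha : IsBoundedBelowBy u a) :
    IsBoundedBelowBy u (c • a) := by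
  obtain ⟨R, hR, ha⟩ := ha
  refine ⟨c * R, mul_nonneg hc hR, ?_⟩
  rw [show (c * R) • u + c • a = c • (R • u + a) by module]
  exact smul_mem_SOSI hc ha

lemma IsBoundedBelowBy.sum {ι : Type*} {s : Finset ι} {f : ι → MonoidAlgebra ℝ Γ}
    (h : ∀ i ∈ s, IsBoundedBelowBy u (f i)) : IsBoundedBelowBy u (∑ i ∈ s, f i) := by
  classical
  induction s using Finset.induction with
  | empty => exact .of_mem_SOSI (by simpa using zero_mem_SOSI)
  | insert x s hx ih =>
    rw [Finset.sum_insert hx]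
    exact (h x (mem_insert_self x s)).add (ih fun i hi ↦ h i (mem_insert_of_mem hi))

end BoundedBelow

section RandomWalk
variable {Γ : Type*} [Group Γ] {μ : MonoidAlgebra ℝ Γ}

lemma sum_smul_edgeLaplacian_eq_two_smul_one_sub (hsymm : ∀ x : Γ, μ.coeff x⁻¹ = μ.coeff x)
    (hprob : ∑ x ∈ μ.coeff.support, μ.coeff x = 1) :
    ∑ x ∈ μ.coeff.support, μ.coeff x • edgeLaplacian x = (2 : ℝ) • (1 - μ) := by
  rw [sum_smul_edgeLaplacian hsymm, aug_eq_sum_coeff, hprob, one_smul]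

lemma one_sub_mem_SOSI (hpos : ∀ x : Γ, 0 ≤ μ.coeff x) (hsymm : ∀ x : Γ, μ.coeff x⁻¹ = μ.coeff x)
    (hprob : ∑ x ∈ μ.coeff.support, μ.coeff x = 1) : 1 - μ ∈ SOSI Γ := by
  have h := smul_mem_SOSI (c := 1 / 2) (by norm_num)
    (sum_mem_SOSI (s := μ.coeff.support) fun x _ ↦
      smul_mem_SOSI (hpos x) (edgeLaplacian_mem_SOSI x))
  rwa [sum_smul_edgeLaplacian_eq_two_smul_one_sub hsymm hprob, smul_smul, one_div,
    inv_mul_cancel₀ two_ne_zero, one_smul] at h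

lemma isBoundedBelowBy_neg_edgeLaplacian_of_mem_support (hpos : ∀ x : Γ, 0 ≤ μ.coeff x)
    (hsymm : ∀ x : Γ, μ.coeff x⁻¹ = μ.coeff x) (hprob : ∑ x ∈ μ.coeff.support, μ.coeff x = 1)
    {y : Γ} (hy : y ∈ μ.coeff.support) : IsBoundedBelowBy (1 - μ) (-edgeLaplacian y) := by
  classical
  have hμy : 0 < μ.coeff y := (hpos y).lt_of_ne' (Finsupp.mem_support_iff.mp hy)
  refine ⟨2 / μ.coeff y, by positivity, ?_⟩
  have hrest : ∑ z ∈ μ.coeff.support.erase y, μ.coeff z • edgeLaplacian z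
      = (2 : ℝ) • (1 - μ) - μ.coeff y • edgeLaplacian y := by
    rw [Finset.sum_erase_eq_sub hy, sum_smul_edgeLaplacian_eq_two_smul_one_sub hsymm hprob]
  have heq : (2 / μ.coeff y) • (1 - μ) + -edgeLaplacian y
      = (1 / μ.coeff y) • ((2 : ℝ) • (1 - μ) - μ.coeff y • edgeLaplacian y) := by
    match_scalars <;> field_simp
  rw [heq, ← hrest]
  exact smul_mem_SOSI (by positivity)
    (sum_mem_SOSI fun z _ ↦ smul_mem_SOSI (hpos z) (edgeLaplacian_mem_SOSI z))

lemma isBoundedBelowBy_neg_edgeLaplacian (hpos : ∀ x : Γ, 0 ≤ μ.coeff x)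
    (hsymm : ∀ x : Γ, μ.coeff x⁻¹ = μ.coeff x) (hprob : ∑ x ∈ μ.coeff.support, μ.coeff x = 1)
    (hgen : Subgroup.closure (μ.coeff.support : Set Γ) = ⊤) (x : Γ) :
    IsBoundedBelowBy (1 - μ) (-edgeLaplacian x) := by
  induction (hgen ▸ Subgroup.mem_top x : x ∈ Subgroup.closure _) using
    Subgroup.closure_induction with
  | mem y hy => exact isBoundedBelowBy_neg_edgeLaplacian_of_mem_support hpos hsymm hprob hy
  | one => exact .of_mem_SOSI (by simpa [edgeLaplacian_one] using zero_mem_SOSI)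
  | mul y z _ _ hy hz =>
    have h := ((hy.smul zero_le_two).add (hz.smul zero_le_two)).add
      (.of_mem_SOSI (two_smul_add_sub_edgeLaplacian_mul_mem_SOSI y z))
    convert h using 1
    module
  | inv y _ hy => rwa [edgeLaplacian_inv]

lemma isBoundedBelowBy_smul_edgeLaplacian (hpos : ∀ x : Γ, 0 ≤ μ.coeff x)
    (hsymm : ∀ x : Γ, μ.coeff x⁻¹ = μ.coeff x) (hprob : ∑ x ∈ μ.coeff.support, μ.coeff x = 1)
    (hgen : Subgroup.closure (μ.coeff.support : Set Γ) = ⊤) (r : ℝ) (x : Γ) :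
    IsBoundedBelowBy (1 - μ) (r • edgeLaplacian x) := by
  rcases le_total 0 r with hr | hr
  · exact .of_mem_SOSI (smul_mem_SOSI hr (edgeLaplacian_mem_SOSI x))
  · simpa using (isBoundedBelowBy_neg_edgeLaplacian hpos hsymm hprob hgen x).smul (neg_nonneg.2 hr)

lemma isBoundedBelowBy_of_mem_augIdeal (hpos : ∀ x : Γ, 0 ≤ μ.coeff x)
    (hsymm : ∀ x : Γ, μ.coeff x⁻¹ = μ.coeff x) (hprob : ∑ x ∈ μ.coeff.support, μ.coeff x = 1)
    (hgen : Subgroup.closure (μ.coeff.support : Set Γ) = ⊤) {η : MonoidAlgebra ℝ Γ}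
    (hη : η ∈ augIdeal Γ) (hηherm : astar η = η) : IsBoundedBelowBy (1 - μ) η := by
  have hηsymm (x : Γ) : η.coeff x⁻¹ = η.coeff x := by rw [← astar_coeff, hηherm]
  have hsum : ∑ x ∈ η.coeff.support, (-2⁻¹ * η.coeff x) • edgeLaplacian x = η := by
    simp only [← smul_smul, ← Finset.smul_sum]
    rw [sum_smul_edgeLaplacian hηsymm, show aug Γ η = 0 from hη, zero_smul, zero_sub]
    module
  rw [← hsum]
  exact .sum fun x _ ↦ isBoundedBelowBy_smul_edgeLaplacian hpos hsymm hprob hgen _ x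

end RandomWalk

/-- `ξ + δΔ_μ` is an algebraic interior point of `Σ²I[Γ]` inside the
hermitian part of `I[Γ]`, for `ξ ∈ Σ²I[Γ]` and `δ > 0`. -/
theorem stmt19 {Γ : Type*} [Group Γ]
    (μ : MonoidAlgebra ℝ Γ) (hpos : ∀ x : Γ, 0 ≤ μ.coeff x) (hsymm : ∀ x : Γ, μ.coeff x⁻¹ = μ.coeff x)
    (hprob : ∑ x ∈ μ.coeff.support, μ.coeff x = 1)
    (hgen : Subgroup.closure (μ.coeff.support : Set Γ) = ⊤)
    (ξ : MonoidAlgebra ℝ Γ) (hξ : ξ ∈ SOSI Γ) (δ : ℝ) (hδ : 0 < δ)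
    (η : MonoidAlgebra ℝ Γ) (hη : η ∈ augIdeal Γ) (hηherm : astar η = η) :
    ∃ t : ℝ, t ∈ Set.Ioc (0 : ℝ) 1 ∧ (1 - t) • (ξ + δ • (1 - μ)) + t • η ∈ SOSI Γ := by
  obtain ⟨R, hR, hRη⟩ := isBoundedBelowBy_of_mem_augIdeal hpos hsymm hprob hgen hη hηherm
  have hD : 0 < δ + R + 1 := by linarith
  set t := δ / (δ + R + 1)
  have ht : 0 < t := div_pos hδ hD
  have ht1 : t ≤ 1 := (div_le_one hD).2 (by linarith)
  have hcoef : (1 - t) * δ - t * R = t := by unfold t; field_simp; ring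
  have hsplit : (1 - t) • (ξ + δ • (1 - μ)) + t • η
      = (1 - t) • ξ + t • (R • (1 - μ) + η) + ((1 - t) * δ - t * R) • (1 - μ) := by
    module
  refine ⟨t, ⟨ht, ht1⟩, ?_⟩
  rw [hsplit]
  exact add_mem_SOSI (add_mem_SOSI (smul_mem_SOSI (by linarith) hξ) (smul_mem_SOSI ht.le hRη))
    (smul_mem_SOSI (by rw [hcoef]; exact ht.le) (one_sub_mem_SOSI hpos hsymm hprob))
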